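/- If X is a D-forced space, then the ideal of nowhere dense subsets of X equals {Y ⊆ X : D \ Y is dense in X for every D ∈ D}. -/

import Mathlib

open Cardinal Set

universe u

variable {X : Type u} [TopologicalSpace X]

/-- A `(𝒟,X)`-mosaic. -/
def IsMosaic (𝒟 : Set (Set X)) (M : Set X) : Prop :=
  ∃ (𝒱 : Set (Set X)) (f : Set X → Set X),
    (∀ V ∈ 𝒱, IsOpen V) ∧ 𝒱.PairwiseDisjoint id ∧ Dense (⋃₀ 𝒱) ∧
    (∀ V ∈ 𝒱, f V ∈ 𝒟) ∧ M = ⋃ V ∈ 𝒱, V ∩ f V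

/-- `X` is `𝒟`-forced iff every dense subset of `X` includes a `𝒟`-mosaic. -/
def DForced (𝒟 : Set (Set X)) : Prop :=
  ∀ S : Set X, Dense S → ∃ M ⊆ S, IsMosaic 𝒟 M

/-! A dense set stays dense after removing a nowhere dense set `Y`, since it meets the open
dense set `(closure Y)ᶜ` densely. Conversely, if `Y` is somewhere dense, a `𝒟`-mosaic inside the
dense set `Y ∪ (closure Y)ᶜ` has a piece `D ∩ U` with `U ⊆ interior (closure Y)`; that piece lies
in `Y`, so `D \ Y` misses the nonempty open set `U`. -/

lemma Dense.diff_of_isNowhereDense {D Y : Set X} (hD : Dense D) (hY : IsNowhereDense Y) :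
    Dense (D \ Y) :=
  (hD.inter_of_isOpen_right (interior_eq_empty_iff_dense_compl.1 hY)
    isClosed_closure.isOpen_compl).mono fun _ hx ↦ ⟨hx.1, fun h ↦ hx.2 (subset_closure h)⟩

lemma dense_union_compl_closure (Y : Set X) : Dense (Y ∪ (closure Y)ᶜ) := by
  intro x
  by_cases hx : x ∈ closure Y
  · exact closure_mono subset_union_left hx
  · exact subset_closure (Or.inr hx)

lemma IsMosaic.exists_inter_subset {𝒟 : Set (Set X)} {M W : Set X} (hM : IsMosaic 𝒟 M)
    (hW : IsOpen W) (hWne : W.Nonempty) :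
    ∃ D ∈ 𝒟, ∃ U, IsOpen U ∧ U.Nonempty ∧ U ⊆ W ∧ D ∩ U ⊆ M := by
  obtain ⟨𝒱, f, hopen, -, hdense, hf𝒟, rfl⟩ := hM
  obtain ⟨x, hxW, V, hV𝒱, hxV⟩ := hdense.inter_open_nonempty W hW hWne
  refine ⟨f V, hf𝒟 V hV𝒱, V ∩ W, (hopen V hV𝒱).inter hW, ⟨x, hxV, hxW⟩, inter_subset_right, ?_⟩
  rintro y ⟨hyD, hyV, -⟩
  exact mem_biUnion hV𝒱 ⟨hyV, hyD⟩

lemma DForced.exists_inter_subset_of_not_isNowhereDense {𝒟 : Set (Set X)} (hf : DForced 𝒟)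
    {Y : Set X} (hY : ¬IsNowhereDense Y) :
    ∃ D ∈ 𝒟, ∃ U, IsOpen U ∧ U.Nonempty ∧ D ∩ U ⊆ Y := by
  obtain ⟨M, hMS, hM⟩ := hf _ (dense_union_compl_closure Y)
  obtain ⟨D, hD, U, hU, hUne, hUW, hDU⟩ :=
    hM.exists_inter_subset isOpen_interior (nonempty_iff_ne_empty.2 hY)
  refine ⟨D, hD, U, hU, hUne, fun y hy ↦ ?_⟩
  exact (hMS (hDU hy)).resolve_right fun hyc ↦ hyc (interior_subset (hUW hy.2))

/-- In a `𝒟`-forced space, the nowhere dense sets are exactly the sets `Y` such that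
`D \ Y` is dense for every `D ∈ 𝒟`. -/
theorem stmt_6 (𝒟 : Set (Set X)) (h𝒟 : ∀ D ∈ 𝒟, Dense D) (hf : DForced 𝒟) :
    {Y : Set X | IsNowhereDense Y} = {Y : Set X | ∀ D ∈ 𝒟, Dense (D \ Y)} := by
  ext Y
  refine ⟨fun hY D hD ↦ (h𝒟 D hD).diff_of_isNowhereDense hY, fun h ↦ ?_⟩
  by_contra hY
  obtain ⟨D, hD, U, hU, ⟨x, hxU⟩, hDU⟩ := hf.exists_inter_subset_of_not_isNowhereDense hY
  obtain ⟨y, hyU, hyD, hyY⟩ := (h D hD).inter_open_nonempty U hU ⟨x, hxU⟩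
  exact hyY (hDU ⟨hyD, hyU⟩)
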